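/- Let z, w, f, g ∈ ℝ^m with f, g ≥ 0 entrywise, and X, Z ∈ ℝ^{m×m} with zero diagonals and nonpositive off-diagonal entries, satisfying: P_d(w(z-w)ᵀ) = P_d(𝟙fᵀ + g𝟙ᵀ), P_od(w(z-w)ᵀ) = P_od(X - Z), and P_od(X + Z) = -P_od(𝟙fᵀ + g𝟙ᵀ). Then for all i ≠ j: (w_i + w_j)((z_i + z_j) - (w_i + w_j)) ≥ 0 and (w_i - w_j)((z_i - z_j) - (w_i - w_j)) ≥ 0, and for all i: w_i(z_i - w_i) ≥ 0. -/

import Mathlib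

open Matrix

/-- Diagonal-part projection: keep diagonal entries, zero elsewhere. -/
def Pd {m : ℕ} (M : Matrix (Fin m) (Fin m) ℝ) : Matrix (Fin m) (Fin m) ℝ :=
  Matrix.of fun i j => if i = j then M i j else 0

/-- Off-diagonal-part projection. -/
def Pod {m : ℕ} (M : Matrix (Fin m) (Fin m) ℝ) : Matrix (Fin m) (Fin m) ℝ :=
  M - Pd M

/-!
Write `a i j = w i * (z j - w j)`. The product `(w i ± w j) * ((z i ± z j) - (w i ± w j))`
expands to `a i i + a j j ± (a i j + a j i)`. The diagonal hypothesis gives `a i i = f i + g i`,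
while off the diagonal `a i j = X i j - Z i j` and `X i j + Z i j = -(f j + g i)`; eliminating `X`
resp. `Z` makes the `f`, `g` terms cancel and leaves `-2 (Z i j + Z j i) ≥ 0` for the sum
and `-2 (X i j + X j i) ≥ 0` for the difference.
-/

theorem Pd_apply_self {m : ℕ} (M : Matrix (Fin m) (Fin m) ℝ) (i : Fin m) :
    Pd M i i = M i i := by
  simp [Pd]

theorem Pod_apply_of_ne {m : ℕ} (M : Matrix (Fin m) (Fin m) ℝ) {i j : Fin m} (hij : i ≠ j) :
    Pod M i j = M i j := by
  simp [Pod, Pd, hij]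

theorem add_mul_add_sub_add {R : Type*} [CommRing R] (a b c d : R) :
    (a + b) * ((c + d) - (a + b)) = a * (c - a) + b * (d - b) + (a * (d - b) + b * (c - a)) := by
  ring

theorem sub_mul_sub_sub_sub {R : Type*} [CommRing R] (a b c d : R) :
    (a - b) * ((c - d) - (a - b)) = a * (c - a) + b * (d - b) - (a * (d - b) + b * (c - a)) := by
  ring

theorem stmt_16_general {m : ℕ} (z w f g : Fin m → ℝ)
    (hf : ∀ i, 0 ≤ f i) (hg : ∀ i, 0 ≤ g i)
    (X Z : Matrix (Fin m) (Fin m) ℝ)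
    (hXod : ∀ i j, i ≠ j → X i j ≤ 0)
    (hZod : ∀ i j, i ≠ j → Z i j ≤ 0)
    (h1 : Pd (vecMulVec w (z - w)) =
      Pd (vecMulVec (fun _ => (1 : ℝ)) f + vecMulVec g (fun _ => (1 : ℝ))))
    (h2 : Pod (vecMulVec w (z - w)) = Pod (X - Z))
    (h3 : Pod (X + Z) =
      -Pod (vecMulVec (fun _ => (1 : ℝ)) f + vecMulVec g (fun _ => (1 : ℝ)))) :
    (∀ i j, i ≠ j → 0 ≤ (w i + w j) * ((z i + z j) - (w i + w j))) ∧
    (∀ i j, i ≠ j → 0 ≤ (w i - w j) * ((z i - z j) - (w i - w j))) ∧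
    (∀ i, 0 ≤ w i * (z i - w i)) := by
  have hdiag (i) : w i * (z i - w i) = f i + g i := by
    simpa [Pd_apply_self, vecMulVec_apply] using congr_fun₂ h1 i i
  have hoff {i j} (hij : i ≠ j) : w i * (z j - w j) = X i j - Z i j := by
    simpa [Pod_apply_of_ne _ hij, vecMulVec_apply] using congr_fun₂ h2 i j
  have hXZ {i j} (hij : i ≠ j) : X i j + Z i j = -(f j + g i) := by
    simpa [Pod_apply_of_ne _ hij, vecMulVec_apply] using congr_fun₂ h3 i j
  refine ⟨fun i j hij => ?_, fun i j hij => ?_, fun i => ?_⟩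
  · rw [add_mul_add_sub_add]
    linarith [hdiag i, hdiag j, hoff hij, hoff hij.symm, hXZ hij, hXZ hij.symm,
      hZod i j hij, hZod j i hij.symm]
  · rw [sub_mul_sub_sub_sub]
    linarith [hdiag i, hdiag j, hoff hij, hoff hij.symm, hXZ hij, hXZ hij.symm,
      hXod i j hij, hXod j i hij.symm]
  · linarith [hdiag i, hf i, hg i]

/-- Symmetric incremental slope[0,1] conditions from the odd-case dual decomposition. -/
theorem stmt_16 {m : ℕ} (z w f g : Fin m → ℝ)
    (hf : ∀ i, 0 ≤ f i) (hg : ∀ i, 0 ≤ g i)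
    (X Z : Matrix (Fin m) (Fin m) ℝ)
    (hXd : ∀ i, X i i = 0) (hXod : ∀ i j, i ≠ j → X i j ≤ 0)
    (hZd : ∀ i, Z i i = 0) (hZod : ∀ i j, i ≠ j → Z i j ≤ 0)
    (h1 : Pd (vecMulVec w (z - w)) =
      Pd (vecMulVec (fun _ => (1 : ℝ)) f + vecMulVec g (fun _ => (1 : ℝ))))
    (h2 : Pod (vecMulVec w (z - w)) = Pod (X - Z))
    (h3 : Pod (X + Z) =
      -Pod (vecMulVec (fun _ => (1 : ℝ)) f + vecMulVec g (fun _ => (1 : ℝ)))) :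
    (∀ i j, i ≠ j → 0 ≤ (w i + w j) * ((z i + z j) - (w i + w j))) ∧
    (∀ i j, i ≠ j → 0 ≤ (w i - w j) * ((z i - z j) - (w i - w j))) ∧
    (∀ i, 0 ≤ w i * (z i - w i)) :=
  stmt_16_general z w f g hf hg X Z hXod hZod h1 h2 h3
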